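/- If X ∈ gl_N(ℂ) satisfies GX = XG, then for every complex u with τ^k u ∉ {z_1,…,z_L} for all k, the operator Σ_{ℓ=1}^L X^{(ℓ)} ∈ End(W) commutes with b′(u) := tr_a(B_a(u)²): [Σ_{ℓ=1}^L X^{(ℓ)}, b′(u)] = 0. (This is the statement that the coefficients of tr B(u)² commute with the degree-zero generators B^{(0)} of the inner-twisted half loop algebra, which span the fixed-point subalgebra of the order-n inner automorphism X ↦ G^{−1}XG.) -/

import Mathlib

/-!
Let `S = Σ_ℓ X^{(ℓ)}` and let `K = S • 1 + X` be the matrix over `End W` describing the total action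
of `X` on `ℂ^N ⊗ W`. Each `𝐏_{aℓ}` is invariant under this action: `K` commutes with it because
`[S, (E_{ji})^{(ℓ)}] = [X, E_{ji}]^{(ℓ)}`. Since `X` commutes with `G`, `K` also commutes with the
scalar matrices `G^{±k}`, hence with `T_a(u)`, `B_a(u)` and `B_a(u)²`. Taking the trace of
`K B² = B² K`, the contribution of `X` cancels because its entries are central, and what is left is
`S tr B² = tr B² S`.
-/

open Matrix
open scoped TensorProduct

noncomputable section

/-- `τ = e^{2πi/n}`. -/
def tau (n : ℕ) : ℂ := Complex.exp (2 * Real.pi * Complex.I / n)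

variable {N L : ℕ}
variable {V : Fin L → Type} [∀ ℓ, AddCommGroup (V ℓ)] [∀ ℓ, Module ℂ (V ℓ)]
variable (ρ : ∀ ℓ, Matrix (Fin N) (Fin N) ℂ →ₗ[ℂ] Module.End ℂ (V ℓ))

/-- The operator `X^{(ℓ)}` on `W = ⨂_ℓ V ℓ`, acting as `ρ ℓ X` in the `ℓ`-th tensor
factor and as the identity elsewhere. -/
def siteOp (ℓ : Fin L) (X : Matrix (Fin N) (Fin N) ℂ) :
    Module.End ℂ (⨂[ℂ] i, V i) :=
  PiTensorProduct.map (Function.update (fun i => (LinearMap.id : V i →ₗ[ℂ] V i)) ℓ (ρ ℓ X))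

/-- The matrix `𝐏_{aℓ}` over `End W`, whose `(i,j)` entry is `(E_{ji})^{(ℓ)}`. -/
def Pm (ℓ : Fin L) : Matrix (Fin N) (Fin N) (Module.End ℂ (⨂[ℂ] i, V i)) :=
  Matrix.of fun i j => siteOp ρ ℓ (Matrix.single j i 1)

/-- `T_a(u) = Σ_ℓ (u − z_ℓ)⁻¹ 𝐏_{aℓ}`. -/
def Tm (z : Fin L → ℂ) (u : ℂ) : Matrix (Fin N) (Fin N) (Module.End ℂ (⨂[ℂ] i, V i)) :=
  ∑ ℓ : Fin L, (u - z ℓ)⁻¹ • Pm ρ ℓ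

/-- A scalar `N×N` matrix viewed as a matrix over `End W`. -/
def emb (V : Fin L → Type) [∀ ℓ, AddCommGroup (V ℓ)] [∀ ℓ, Module ℂ (V ℓ)]
    (M : Matrix (Fin N) (Fin N) ℂ) :
    Matrix (Fin N) (Fin N) (Module.End ℂ (⨂[ℂ] i, V i)) :=
  M.map (algebraMap ℂ (Module.End ℂ (⨂[ℂ] i, V i)))

/-- `B_a(u) = Σ_{k=0}^{n−1} τ^k G^k T_a(τ^k u) G^{−k}`. -/
def Bm (z : Fin L → ℂ) (n : ℕ) (G : Matrix (Fin N) (Fin N) ℂ) (u : ℂ) :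
    Matrix (Fin N) (Fin N) (Module.End ℂ (⨂[ℂ] i, V i)) :=
  ∑ k ∈ Finset.range n,
    tau n ^ k • (emb V (G ^ k) * Tm ρ z (tau n ^ k * u) * emb V (G⁻¹ ^ k))

/-- `M_a = M ⊗ 1` as an `N²×N²` matrix. -/
def aM {A : Type} [Zero A] (M : Matrix (Fin N) (Fin N) A) :
    Matrix (Fin N × Fin N) (Fin N × Fin N) A :=
  Matrix.of fun p q => if p.2 = q.2 then M p.1 q.1 else 0

/-- `M_b = 1 ⊗ M` as an `N²×N²` matrix. -/
def bM {A : Type} [Zero A] (M : Matrix (Fin N) (Fin N) A) :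
    Matrix (Fin N × Fin N) (Fin N × Fin N) A :=
  Matrix.of fun p q => if p.1 = q.1 then M p.2 q.2 else 0

/-- The permutation matrix `P_{ab} = Σ_{ij} E_{ij} ⊗ E_{ji}`. -/
def PP (N : ℕ) (A : Type) [Zero A] [One A] :
    Matrix (Fin N × Fin N) (Fin N × Fin N) A :=
  Matrix.of fun p q => if p.1 = q.2 ∧ p.2 = q.1 then 1 else 0

namespace PiTensorProduct

variable {ι R : Type*} [DecidableEq ι] [CommSemiring R] {s : ι → Type*}
  [∀ i, AddCommMonoid (s i)] [∀ i, Module R (s i)]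

def mapSingleAlgHom (i : ι) : Module.End R (s i) →ₐ[R] Module.End R (⨂[R] j, s j) :=
  AlgHom.ofLinearMap ((mapMultilinear R s s).toLinearMap 1 i)
    (show map (Pi.mulSingle i 1) = 1 by rw [Pi.mulSingle_one]; exact PiTensorProduct.map_one)
    fun f g => show map (Pi.mulSingle i (f * g)) = map (Pi.mulSingle i f) * map (Pi.mulSingle i g)
      by rw [Pi.mulSingle_mul]; exact PiTensorProduct.map_mul _ _

theorem commute_mapSingleAlgHom {i j : ι} (h : i ≠ j) (u : Module.End R (s i))
    (v : Module.End R (s j)) : Commute (mapSingleAlgHom i u) (mapSingleAlgHom j v) :=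
  (Pi.mulSingle_commute (f := fun i => Module.End R (s i)) h u v).map mapMonoidHom

end PiTensorProduct

namespace Matrix

section Semiring

variable {n R A : Type*} [Fintype n] [CommSemiring R] [Ring A] [Algebra R A]

theorem commute_scalar_map_algebraMap [DecidableEq n] (a : A) (C : Matrix n n R) :
    Commute (scalar n a) (C.map (algebraMap R A)) := by
  ext i j
  simp [scalar_apply, diagonal_mul, mul_diagonal, Algebra.commutes]

theorem commute_scalar_add_map [DecidableEq n] {a : A} {C D : Matrix n n R} (h : Commute C D) :
    Commute (scalar n a + C.map (algebraMap R A)) (D.map (algebraMap R A)) :=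
  (commute_scalar_map_algebraMap a D).add_left (h.map (algebraMap R A).mapMatrix)

theorem trace_mul_map_algebraMap_comm (M : Matrix n n A) (C : Matrix n n R) :
    (M * C.map (algebraMap R A)).trace = (C.map (algebraMap R A) * M).trace := by
  simp only [trace, diag, mul_apply, map_apply]
  rw [Finset.sum_comm]
  exact Finset.sum_congr rfl fun i _ => Finset.sum_congr rfl fun j _ => (Algebra.commutes _ _).symm

theorem trace_scalar_mul [DecidableEq n] (a : A) (M : Matrix n n A) :
    (scalar n a * M).trace = a * M.trace := by
  rw [scalar_apply, ← smul_eq_diagonal_mul, trace_smul, smul_eq_mul]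

theorem trace_mul_scalar [DecidableEq n] (a : A) (M : Matrix n n A) :
    (M * scalar n a).trace = M.trace * a := by
  rw [scalar_apply, ← op_smul_eq_mul_diagonal, trace_smul, op_smul_eq_mul]

theorem commute_trace_of_commute_scalar_add [DecidableEq n] {a : A} {C : Matrix n n R}
    {M : Matrix n n A} (h : Commute (scalar n a + C.map (algebraMap R A)) M) :
    Commute a M.trace := by
  have := congrArg trace h.eq
  rw [add_mul, mul_add, trace_add, trace_add, trace_scalar_mul, trace_mul_scalar,
    trace_mul_map_algebraMap_comm] at this
  exact add_right_cancel this

theorem mul_single_one_eq_sum [DecidableEq n] (X : Matrix n n R) (i j : n) :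
    X * single j i 1 = ∑ k, X k j • single k i 1 := by
  ext a b
  simp [mul_apply, single_apply, Matrix.sum_apply, ite_and]

theorem single_one_mul_eq_sum [DecidableEq n] (X : Matrix n n R) (i j : n) :
    single j i 1 * X = ∑ k, X i k • single j k 1 := by
  ext a b
  simp [mul_apply, single_apply, Matrix.sum_apply, ite_and]

end Semiring

variable {n R A : Type*} [Fintype n] [DecidableEq n] [CommRing R] [Ring A] [Algebra R A]

theorem of_map_commutator_single (φ : Matrix n n R →ₗ[R] A) (X : Matrix n n R) :
    (of fun i j => φ (X * single j i 1 - single j i 1 * X)) =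
      (of fun i j => φ (single j i 1)) * X.map (algebraMap R A) -
        X.map (algebraMap R A) * of fun i j => φ (single j i 1) := by
  ext i j
  rw [of_apply, mul_single_one_eq_sum, single_one_mul_eq_sum, map_sub, map_sum, map_sum,
    Matrix.sub_apply, mul_apply, mul_apply]
  simp only [of_apply, map_apply, map_smul]
  simp only [Algebra.smul_def, Algebra.commutes (X _ j)]

theorem commute_nonsing_inv_right {B C : Matrix n n R} (h : Commute B C) : Commute B C⁻¹ := by
  by_cases hC : IsUnit C.det
  · exact h.units_inv_right (u := nonsingInvUnit C hC)
  · rw [nonsing_inv_apply_not_isUnit C hC]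
    exact Commute.zero_right B

end Matrix

open PiTensorProduct

theorem siteOp_eq_mapSingleAlgHom (ℓ : Fin L) (A : Matrix (Fin N) (Fin N) ℂ) :
    siteOp ρ ℓ A = mapSingleAlgHom ℓ (ρ ℓ A) := rfl

theorem siteOp_commutator
    (hρ : ∀ ℓ (X Y : Matrix (Fin N) (Fin N) ℂ),
      ρ ℓ (X * Y - Y * X) = ρ ℓ X * ρ ℓ Y - ρ ℓ Y * ρ ℓ X)
    (ℓ : Fin L) (A B : Matrix (Fin N) (Fin N) ℂ) :
    siteOp ρ ℓ (A * B - B * A) = siteOp ρ ℓ A * siteOp ρ ℓ B - siteOp ρ ℓ B * siteOp ρ ℓ A := by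
  simp only [siteOp_eq_mapSingleAlgHom, hρ, map_sub, map_mul]

theorem commute_siteOp_of_ne {ℓ m : Fin L} (h : ℓ ≠ m) (A B : Matrix (Fin N) (Fin N) ℂ) :
    Commute (siteOp ρ ℓ A) (siteOp ρ m B) :=
  commute_mapSingleAlgHom h _ _

theorem sum_siteOp_mul_sub_mul_sum_siteOp
    (hρ : ∀ ℓ (X Y : Matrix (Fin N) (Fin N) ℂ),
      ρ ℓ (X * Y - Y * X) = ρ ℓ X * ρ ℓ Y - ρ ℓ Y * ρ ℓ X)
    (X : Matrix (Fin N) (Fin N) ℂ) (m : Fin L) (E : Matrix (Fin N) (Fin N) ℂ) :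
    (∑ ℓ, siteOp ρ ℓ X) * siteOp ρ m E - siteOp ρ m E * ∑ ℓ, siteOp ρ ℓ X
      = siteOp ρ m (X * E - E * X) := by
  rw [Finset.sum_mul, Finset.mul_sum, ← Finset.sum_sub_distrib,
    Finset.sum_eq_single_of_mem m (Finset.mem_univ m) fun ℓ _ h =>
      sub_eq_zero.mpr (commute_siteOp_of_ne ρ h X E).eq,
    siteOp_commutator ρ hρ]

theorem commute_Pm
    (hρ : ∀ ℓ (X Y : Matrix (Fin N) (Fin N) ℂ),
      ρ ℓ (X * Y - Y * X) = ρ ℓ X * ρ ℓ Y - ρ ℓ Y * ρ ℓ X)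
    (X : Matrix (Fin N) (Fin N) ℂ) (m : Fin L) :
    Commute (scalar (Fin N) (∑ ℓ, siteOp ρ ℓ X) + emb V X) (Pm ρ m) := by
  have hS : scalar (Fin N) (∑ ℓ, siteOp ρ ℓ X) * Pm ρ m -
      Pm ρ m * scalar (Fin N) (∑ ℓ, siteOp ρ ℓ X) = of fun i j => siteOp ρ m (X * single j i 1 - single j i 1 * X) := by
    ext i j
    simp only [scalar_apply, diagonal_mul, mul_diagonal, Matrix.sub_apply, of_apply, Pm,
      sum_siteOp_mul_sub_mul_sum_siteOp ρ hρ]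
  have hX := of_map_commutator_single ((mapSingleAlgHom m).toLinearMap ∘ₗ ρ m) X
  rw [Commute, SemiconjBy, add_mul, mul_add, add_comm (Pm ρ m * _), ← sub_eq_sub_iff_add_eq_add]
  exact hS.trans hX

theorem commute_Tm
    (hρ : ∀ ℓ (X Y : Matrix (Fin N) (Fin N) ℂ),
      ρ ℓ (X * Y - Y * X) = ρ ℓ X * ρ ℓ Y - ρ ℓ Y * ρ ℓ X)
    (X : Matrix (Fin N) (Fin N) ℂ) (z : Fin L → ℂ) (u : ℂ) :
    Commute (scalar (Fin N) (∑ ℓ, siteOp ρ ℓ X) + emb V X) (Tm ρ z u) :=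
  Commute.sum_right _ _ _ fun m _ => (commute_Pm ρ hρ X m).smul_right _

theorem commute_Bm
    (hρ : ∀ ℓ (X Y : Matrix (Fin N) (Fin N) ℂ),
      ρ ℓ (X * Y - Y * X) = ρ ℓ X * ρ ℓ Y - ρ ℓ Y * ρ ℓ X)
    (z : Fin L → ℂ) (n : ℕ) (G X : Matrix (Fin N) (Fin N) ℂ) (hX : Commute X G) (u : ℂ) :
    Commute (scalar (Fin N) (∑ ℓ, siteOp ρ ℓ X) + emb V X) (Bm ρ z n G u) :=
  Commute.sum_right _ _ _ fun k _ => Commute.smul_right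
    (((commute_scalar_add_map (hX.pow_right k)).mul_right (commute_Tm ρ hρ X z _)).mul_right
      (commute_scalar_add_map ((commute_nonsing_inv_right hX).pow_right k))) _

theorem statement5
    (hρ : ∀ ℓ (X Y : Matrix (Fin N) (Fin N) ℂ),
      ρ ℓ (X * Y - Y * X) = ρ ℓ X * ρ ℓ Y - ρ ℓ Y * ρ ℓ X)
    (z : Fin L → ℂ)
    (n : ℕ) (G : Matrix (Fin N) (Fin N) ℂ)
    (X : Matrix (Fin N) (Fin N) ℂ) (hX : G * X = X * G)
    (u : ℂ) :
    (∑ ℓ : Fin L, siteOp ρ ℓ X) * (Bm ρ z n G u * Bm ρ z n G u).trace -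
      (Bm ρ z n G u * Bm ρ z n G u).trace * (∑ ℓ : Fin L, siteOp ρ ℓ X) = 0 := by
  have hB := commute_Bm ρ hρ z n G X (Commute.symm hX) u
  exact sub_eq_zero.mpr (commute_trace_of_commute_scalar_add (hB.mul_right hB)).eq
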